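/- Let Ω be a set of functions [0,1] → ℝ, ≼ a well-order on Ω, ω^a the ≼-least element agreeing with ω on [0,a], and ω^{a−} the ≼-least element agreeing with ω on [0,a). Define F_ω as the set of t ∈ [0,1] such that either ω^{t'} ≠ ω^t for all t' ∈ (t,1], or ω^{t'} ≠ ω^t for all t' ∈ [0,t). Then F_ω is well-ordered by ≤ (and hence countable and nowhere dense). -/

import Mathlib

/-!
Agreement with `ω` on `[0, t]` is inherited by `[0, t']` for `t' ≤ t`, so the least such function
can only grow with `t`: along a strictly decreasing sequence `t₀ > t₁ > ⋯` in `F_ω` the predictions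
`pred tₙ` form a weakly decreasing sequence in a well-order, which is therefore eventually constant.
But then a point `tₙ` of that tail has the same prediction as a point above it and a point below
it, so it lies in neither half of `F_ω`.
-/

theorem IsWellOrder.exists_forall_lt_eq_of_not_rel {α : Type*} {r : α → α → Prop}
    (hr : IsWellOrder α r) (g : ℕ → α) (hg : ∀ n m, n < m → ¬ r (g n) (g m)) :
    ∃ N, ∀ m, N < m → g m = g N := by
  obtain ⟨_, ⟨N, rfl⟩, hmin⟩ := hr.wf.has_min (Set.range g) ⟨g 0, Set.mem_range_self 0⟩
  refine ⟨N, fun m hm => ?_⟩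
  rcases @trichotomous_of _ r hr.toTrichotomous (g m) (g N) with hlt | heq | hgt
  · exact absurd hlt (hmin (g m) (Set.mem_range_self m))
  · exact heq
  · exact absurd hgt (hg N m hm)

theorem not_rel_pred_of_le {Ω : Set (ℝ → ℝ)} {r : Ω → Ω → Prop} {ω : Ω} {pred : ℝ → Ω}
    (hagree : ∀ a ∈ Set.Icc (0:ℝ) 1,
      Set.EqOn ((pred a : ℝ → ℝ)) (ω : ℝ → ℝ) (Set.Icc 0 a))
    (hleast : ∀ a ∈ Set.Icc (0:ℝ) 1, ∀ ω' : Ω,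
      Set.EqOn (ω' : ℝ → ℝ) (ω : ℝ → ℝ) (Set.Icc 0 a) → ¬ r ω' (pred a))
    {s t : ℝ} (hs : s ∈ Set.Icc (0:ℝ) 1) (ht : t ∈ Set.Icc (0:ℝ) 1) (hst : s ≤ t) :
    ¬ r (pred t) (pred s) :=
  hleast s hs (pred t) ((hagree t ht).mono (Set.Icc_subset_Icc_right hst))

/-- The failure set `F_ω` of the Ockham prediction system is well-ordered by `≤`. -/
theorem ockham_F_isWF
    (Ω : Set (ℝ → ℝ)) (r : Ω → Ω → Prop) (hr : IsWellOrder Ω r)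
    (ω : Ω) (pred : ℝ → Ω)
    (hagree : ∀ a ∈ Set.Icc (0:ℝ) 1,
      Set.EqOn ((pred a : ℝ → ℝ)) (ω : ℝ → ℝ) (Set.Icc 0 a))
    (hleast : ∀ a ∈ Set.Icc (0:ℝ) 1, ∀ ω' : Ω,
      Set.EqOn (ω' : ℝ → ℝ) (ω : ℝ → ℝ) (Set.Icc 0 a) → ¬ r ω' (pred a)) :
    Set.IsWF {t | t ∈ Set.Icc (0:ℝ) 1 ∧
      ((∀ t' ∈ Set.Ioc t 1, pred t' ≠ pred t) ∨
       (∀ t' ∈ Set.Ico (0:ℝ) t, pred t' ≠ pred t))} := by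
  rw [Set.isWF_iff_no_descending_seq]
  intro f hf hmem
  have hIcc n : f n ∈ Set.Icc (0:ℝ) 1 := (hmem n).1
  obtain ⟨N, hconst⟩ := hr.exists_forall_lt_eq_of_not_rel (pred ∘ f) fun n m hnm =>
    not_rel_pred_of_le hagree hleast (hIcc m) (hIcc n) (hf hnm).le
  have hN₁ : pred (f (N + 1)) = pred (f N) := hconst (N + 1) (by omega)
  have hN₂ : pred (f (N + 2)) = pred (f N) := hconst (N + 2) (by omega)
  rcases (hmem (N + 1)).2 with habove | hbelow
  · exact habove (f N) ⟨hf (by omega), (hIcc N).2⟩ hN₁.symm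
  · exact hbelow (f (N + 2)) ⟨(hIcc (N + 2)).1, hf (by omega)⟩ (hN₂.trans hN₁.symm)
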